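/- arXiv:1712.06196 — 2 statements merged into one kernel-verified Lean document; each statement's English description precedes it below -/
import Mathlib

section
/- Normal ellipticity of the principal symbol: if T > 0 is a real number, then every complex eigenvalue of the matrix T · F_0^{−1} is real and lies in the interval (T η^{−1}, T δ^{−1}]; in particular, every eigenvalue of T · F_0^{−1} has strictly positive real part. -/
/-!
Extending `v : Fin m → ℂ` by `w n = -∑ i, v i` turns `F₀` into the full Maxwell–Stefan operator
`(A w) i = ∑ j, k i j * (c j * w i - c i * w j)` on the hyperplane `∑ i, w i = 0`, which `A`
preserves because `k` is symmetric. If `A w = λ w` and `w = c • u`, pairing with `conj u` gives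
`λ * ∑ i, c i * |u i|² = (1/2) * ∑ i, ∑ j, c i * k i j * c j * |u i - u j|²`, so `λ` is real.
Since `∑ i, c i * u i = 0`, the right side is at least `δ₀ * c_tot * ∑ i, c i * |u i|²`, and
`|u i - u j|² ≤ 2 |u i|² + 2 |u j|²` bounds it by twice the largest row sum
`∑ j ≠ i, k i j * c j` times `∑ i, c i * |u i|²`; for `n ≥ 2` every such row sum is below
`cmax * ∑ i, ∑ j ≠ i, k i j`. An eigenvector with `c i = 0 ≠ w i` is not of the form `c • u`,
but then row `i` alone gives `λ = ∑ j ≠ i, k i j * c j`. The eigenvalues of `T • F₀⁻¹` are the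
`T / λ`.
-/

/-- The reduced Maxwell–Stefan matrix `F₀` with entries
`[F₀] i j = -(k i j - k i n) * c i` for `i ≠ j` and
`[F₀] i i = ∑_{j ≠ i, j ≤ n-1} (k i j - k i n) * c j + c_tot * k i n`,
where `c_tot = ∑ r, c r`. The number of species is `m + 1` (the paper's `n`),
and the paper's index `n` is `Fin.last m`. -/
def MSmatF0 (m : ℕ) (k : Fin (m + 1) → Fin (m + 1) → ℝ)
    (c : Fin (m + 1) → ℝ) : Matrix (Fin m) (Fin m) ℝ :=
  Matrix.of fun i j =>
    if i = j then
      (∑ j' ∈ Finset.univ.erase i,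
          (k i.castSucc j'.castSucc - k i.castSucc (Fin.last m)) * c j'.castSucc)
        + (∑ r, c r) * k i.castSucc (Fin.last m)
    else -((k i.castSucc j.castSucc - k i.castSucc (Fin.last m)) * c i.castSucc)

open Finset Complex ComplexConjugate Matrix

theorem Complex.normSq_sub_le (z w : ℂ) : normSq (z - w) ≤ 2 * normSq z + 2 * normSq w := by
  nlinarith [normSq_sub z w, normSq_add z w, normSq_nonneg (z + w)]

section WeightedSums

variable {ι : Type*} [Fintype ι]

theorem sum_sum_mul_normSq_sub (p : ι → ℝ) (u : ι → ℂ) :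
    ∑ i, ∑ j, p i * p j * normSq (u i - u j)
      = 2 * ((∑ i, p i) * ∑ i, p i * normSq (u i) - normSq (∑ i, p i * u i)) := by
  have hcross : normSq (∑ i, p i * u i) = ∑ i, ∑ j, p i * p j * (u i * conj (u j)).re := by
    rw [← ofReal_re (normSq _), ← mul_conj, map_sum, sum_mul_sum, re_sum]
    refine sum_congr rfl fun i _ => ?_
    rw [re_sum]
    refine sum_congr rfl fun j _ => ?_
    rw [map_mul, conj_ofReal, mul_mul_mul_comm, ← ofReal_mul, re_ofReal_mul]
  have hsq : ∑ i, ∑ j, p i * p j * normSq (u j) = (∑ i, p i) * ∑ i, p i * normSq (u i) := by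
    simp_rw [sum_mul_sum, mul_assoc]
  have hsq' : ∑ i, ∑ j, p i * p j * normSq (u i) = (∑ i, p i) * ∑ i, p i * normSq (u i) := by
    rw [sum_comm, ← hsq]
    simp_rw [mul_comm (p _) (p _)]
  simp only [normSq_sub, mul_sub, mul_add, sum_sub_distrib, sum_add_distrib, hcross, hsq, hsq',
    mul_left_comm _ (2 : ℝ), ← mul_sum]
  ring

theorem sum_sum_mul_normSq_sub_le [DecidableEq ι] (a : ι → ι → ℝ) (ha : ∀ i j, a i j = a j i)
    (ha0 : ∀ i j, i ≠ j → 0 ≤ a i j) (u : ι → ℂ) :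
    ∑ i, ∑ j, a i j * normSq (u i - u j)
      ≤ 4 * ∑ i, (∑ j ∈ univ.erase i, a i j) * normSq (u i) := by
  have hswap : ∑ i, ∑ j ∈ univ.erase i, a i j * normSq (u j)
      = ∑ i, (∑ j ∈ univ.erase i, a i j) * normSq (u i) := by
    rw [sum_comm' (s' := fun j => univ.erase j) (t' := univ) (by simp [ne_comm])]
    simp_rw [sum_mul, ha]
  calc ∑ i, ∑ j, a i j * normSq (u i - u j)
      = ∑ i, ∑ j ∈ univ.erase i, a i j * normSq (u i - u j) :=
        sum_congr rfl fun i _ => (sum_erase _ (by simp)).symm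
    _ ≤ ∑ i, ∑ j ∈ univ.erase i, (2 * (a i j * normSq (u i)) + 2 * (a i j * normSq (u j))) := by
        gcongr with i _ j hj
        nlinarith [normSq_sub_le (u i) (u j), ha0 i j (ne_of_mem_erase hj).symm]
    _ = 4 * ∑ i, (∑ j ∈ univ.erase i, a i j) * normSq (u i) := by
        simp_rw [sum_add_distrib, ← mul_sum, hswap, ← sum_mul]
        ring

theorem sum_conj_mul_sum_mul_sub (a : ι → ι → ℝ) (ha : ∀ i j, a i j = a j i) (u : ι → ℂ) :
    ∑ i, conj (u i) * ∑ j, a i j * (u i - u j)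
      = ((∑ i, ∑ j, a i j * normSq (u i - u j)) / 2 : ℝ) := by
  have hswap : ∑ i, conj (u i) * ∑ j, (a i j : ℂ) * (u i - u j)
      = ∑ i, ∑ j, -(a i j * conj (u j) * (u i - u j)) := by
    rw [sum_comm]
    simp only [mul_sum]
    refine sum_congr rfl fun i _ => sum_congr rfl fun j _ => ?_
    rw [ha]; ring
  push_cast
  simp only [normSq_eq_conj_mul_self, map_sub]
  rw [eq_div_iff two_ne_zero, mul_two]
  nth_rewrite 2 [hswap]
  simp only [mul_sum, ← sum_add_distrib]
  refine sum_congr rfl fun i _ => sum_congr rfl fun j _ => by ring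

end WeightedSums

section MaxwellStefanOp

variable {ι : Type*} [Fintype ι]

def maxwellStefanOp (k : ι → ι → ℝ) (c : ι → ℝ) (w : ι → ℂ) (i : ι) : ℂ :=
  ∑ j, (k i j : ℂ) * (c j * w i - c i * w j)

theorem maxwellStefanOp_eq_sub (k : ι → ι → ℝ) (c : ι → ℝ) (w : ι → ℂ) (i : ι) :
    maxwellStefanOp k c w i = (∑ j, k i j * c j : ℝ) * w i - c i * ∑ j, k i j * w j := by
  simp only [maxwellStefanOp, mul_sub, sum_sub_distrib, ofReal_sum, ofReal_mul, sum_mul, mul_sum]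
  congr 1 <;> exact sum_congr rfl fun j _ => by ring

variable {k : ι → ι → ℝ} {c : ι → ℝ}

theorem sum_maxwellStefanOp_eq_zero (hsymm : ∀ i j, k i j = k j i) (w : ι → ℂ) :
    ∑ i, maxwellStefanOp k c w i = 0 := by
  have hswap : ∑ i, ∑ j, (k i j : ℂ) * (c i * w j) = ∑ i, ∑ j, (k i j : ℂ) * (c j * w i) := by
    rw [sum_comm]
    simp_rw [hsymm]
  simp only [maxwellStefanOp, mul_sub, sum_sub_distrib, hswap, sub_self]

theorem maxwellStefanOp_of_eq_zero [DecidableEq ι] {i : ι} (hci : c i = 0) (w : ι → ℂ) :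
    maxwellStefanOp k c w i = (∑ j ∈ univ.erase i, k i j * c j : ℝ) * w i := by
  rw [sum_erase _ (by simp [hci]), ofReal_sum, sum_mul]
  simp [maxwellStefanOp, hci, mul_assoc]

theorem maxwellStefanOp_mul (u : ι → ℂ) (i : ι) :
    maxwellStefanOp k c (fun j => c j * u j) i
      = ∑ j, ((c i * k i j * c j : ℝ) : ℂ) * (u i - u j) :=
  sum_congr rfl fun j _ => by push_cast; ring

def maxwellStefanForm (k : ι → ι → ℝ) (c : ι → ℝ) (u : ι → ℂ) : ℝ :=
  ∑ i, ∑ j, c i * k i j * c j * normSq (u i - u j)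

theorem sum_conj_mul_maxwellStefanOp_mul (hsymm : ∀ i j, k i j = k j i) (u : ι → ℂ) :
    ∑ i, conj (u i) * maxwellStefanOp k c (fun j => c j * u j) i
      = (maxwellStefanForm k c u / 2 : ℝ) := by
  simp_rw [maxwellStefanOp_mul]
  exact sum_conj_mul_sum_mul_sub _ (fun i j => by rw [hsymm]; ring) u

theorem mul_sum_le_maxwellStefanForm {δ₀ : ℝ} (hδ₀ : ∀ i j, i ≠ j → δ₀ ≤ k i j)
    (hc : ∀ i, 0 ≤ c i) {u : ι → ℂ} (hsum : ∑ i, c i * u i = 0) :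
    2 * (δ₀ * ∑ i, c i) * ∑ i, c i * normSq (u i) ≤ maxwellStefanForm k c u := by
  calc 2 * (δ₀ * ∑ i, c i) * ∑ i, c i * normSq (u i)
      = δ₀ * ∑ i, ∑ j, c i * c j * normSq (u i - u j) := by
        rw [sum_sum_mul_normSq_sub, hsum, map_zero]
        ring
    _ ≤ maxwellStefanForm k c u := by
        rw [mul_sum]
        refine sum_le_sum fun i _ => ?_
        rw [mul_sum]
        refine sum_le_sum fun j _ => ?_
        rcases eq_or_ne i j with rfl | hij
        · simp
        · have := mul_le_mul_of_nonneg_right (hδ₀ i j hij) (mul_nonneg (hc i) (hc j))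
          have := normSq_nonneg (u i - u j)
          nlinarith

theorem maxwellStefanForm_lt [DecidableEq ι] {B : ℝ} (hsymm : ∀ i j, k i j = k j i)
    (hk : ∀ i j, i ≠ j → 0 ≤ k i j) (hc : ∀ i, 0 ≤ c i)
    (hB : ∀ i, ∑ j ∈ univ.erase i, k i j * c j < B) {u : ι → ℂ} {i₀ : ι}
    (hi₀ : 0 < c i₀ * normSq (u i₀)) :
    maxwellStefanForm k c u < 4 * (B * ∑ i, c i * normSq (u i)) := by
  calc maxwellStefanForm k c u
      ≤ 4 * ∑ i, (∑ j ∈ univ.erase i, c i * k i j * c j) * normSq (u i) :=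
        sum_sum_mul_normSq_sub_le _ (fun i j => by rw [hsymm]; ring)
          (fun i j hij => by have := hk i j hij; have := hc i; have := hc j; positivity) u
    _ = 4 * ∑ i, (∑ j ∈ univ.erase i, k i j * c j) * (c i * normSq (u i)) := by
        simp_rw [mul_assoc, ← mul_sum]
        congr 1
        exact sum_congr rfl fun i _ => by ring
    _ < 4 * (B * ∑ i, c i * normSq (u i)) := by
        rw [mul_sum _ _ B]
        refine mul_lt_mul_of_pos_left (sum_lt_sum (fun i _ => ?_) ⟨i₀, mem_univ i₀, ?_⟩)
          (four_pos (α := ℝ))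
        · exact mul_le_mul_of_nonneg_right (hB i).le (mul_nonneg (hc i) (normSq_nonneg _))
        · exact mul_lt_mul_of_pos_right (hB i₀) hi₀

variable [DecidableEq ι] {δ₀ B : ℝ} {μ : ℂ}

theorem maxwellStefanOp_eigenvalue_bounds_of_eq_zero (hk : ∀ i j, i ≠ j → 0 ≤ k i j)
    (hδ₀ : ∀ i j, i ≠ j → δ₀ ≤ k i j) (hc : ∀ i, 0 ≤ c i)
    (hB : ∀ i, ∑ j ∈ univ.erase i, k i j * c j < B) {w : ι → ℂ} {i : ι} (hci : c i = 0)
    (hwi : w i ≠ 0) (heig : maxwellStefanOp k c w i = μ * w i) :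
    ∃ l : ℝ, μ = l ∧ δ₀ * ∑ i, c i ≤ l ∧ l < 2 * B := by
  refine ⟨∑ j ∈ univ.erase i, k i j * c j,
    mul_right_cancel₀ hwi (heig.symm.trans (maxwellStefanOp_of_eq_zero hci w)), ?_, ?_⟩
  · rw [← sum_erase _ hci, mul_sum]
    exact sum_le_sum fun j hj =>
      mul_le_mul_of_nonneg_right (hδ₀ i j (ne_of_mem_erase hj).symm) (hc j)
  · have : 0 ≤ ∑ j ∈ univ.erase i, k i j * c j :=
      sum_nonneg fun j hj => mul_nonneg (hk i j (ne_of_mem_erase hj).symm) (hc j)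
    linarith [hB i]

theorem maxwellStefanOp_eigenvalue_bounds_of_mul (hsymm : ∀ i j, k i j = k j i)
    (hk : ∀ i j, i ≠ j → 0 ≤ k i j) (hδ₀ : ∀ i j, i ≠ j → δ₀ ≤ k i j) (hc : ∀ i, 0 ≤ c i)
    (hB : ∀ i, ∑ j ∈ univ.erase i, k i j * c j < B) {u : ι → ℂ} (hsum : ∑ i, c i * u i = 0)
    (hne : ∃ i, (c i : ℂ) * u i ≠ 0)
    (heig : ∀ i, maxwellStefanOp k c (fun j => c j * u j) i = μ * (c i * u i)) :
    ∃ l : ℝ, μ = l ∧ δ₀ * ∑ i, c i ≤ l ∧ l < 2 * B := by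
  set N := ∑ i, c i * normSq (u i)
  obtain ⟨i₀, hi₀⟩ : ∃ i, 0 < c i * normSq (u i) := by
    obtain ⟨i, hci, hui⟩ : ∃ i, (c i : ℂ) ≠ 0 ∧ u i ≠ 0 := by simpa using hne
    exact ⟨i, mul_pos ((hc i).lt_of_ne' (by exact_mod_cast hci)) (normSq_pos.2 hui)⟩
  have hN : 0 < N :=
    sum_pos' (fun i _ => mul_nonneg (hc i) (normSq_nonneg _)) ⟨i₀, mem_univ i₀, hi₀⟩
  have hμN : μ * N = (maxwellStefanForm k c u / 2 : ℝ) := by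
    rw [← sum_conj_mul_maxwellStefanOp_mul hsymm, ofReal_sum, mul_sum]
    refine sum_congr rfl fun i _ => ?_
    rw [heig, ofReal_mul, normSq_eq_conj_mul_self]
    ring
  have hlow := mul_sum_le_maxwellStefanForm hδ₀ hc hsum
  have hup := maxwellStefanForm_lt hsymm hk hc hB hi₀
  refine ⟨maxwellStefanForm k c u / (2 * N), ?_, ?_, ?_⟩
  · have hN' : (N : ℂ) ≠ 0 := ofReal_ne_zero.2 hN.ne'
    push_cast at hμN ⊢
    field_simp
    linear_combination 2 * hμN
  · rw [le_div_iff₀ (by positivity)]; linarith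
  · rw [div_lt_iff₀ (by positivity)]; linarith

theorem maxwellStefanOp_eigenvalue_bounds (hsymm : ∀ i j, k i j = k j i)
    (hk : ∀ i j, i ≠ j → 0 ≤ k i j) (hδ₀ : ∀ i j, i ≠ j → δ₀ ≤ k i j) (hc : ∀ i, 0 ≤ c i)
    (hB : ∀ i, ∑ j ∈ univ.erase i, k i j * c j < B) {w : ι → ℂ} (hw0 : w ≠ 0)
    (hsum : ∑ i, w i = 0) (heig : ∀ i, maxwellStefanOp k c w i = μ * w i) :
    ∃ l : ℝ, μ = l ∧ δ₀ * ∑ i, c i ≤ l ∧ l < 2 * B := by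
  by_cases hdeg : ∃ i, c i = 0 ∧ w i ≠ 0
  · obtain ⟨i, hci, hwi⟩ := hdeg
    exact maxwellStefanOp_eigenvalue_bounds_of_eq_zero hk hδ₀ hc hB hci hwi (heig i)
  push Not at hdeg
  have hw : (fun i => (c i : ℂ) * (w i / c i)) = w := by
    ext i
    rcases eq_or_ne (c i) 0 with hci | hci
    · simp [hci, hdeg i hci]
    · exact mul_div_cancel₀ _ (ofReal_ne_zero.2 hci)
  rw [← hw] at hw0 hsum heig
  refine maxwellStefanOp_eigenvalue_bounds_of_mul hsymm hk hδ₀ hc hB hsum ?_ (fun i => heig i)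
  simpa [funext_iff] using hw0

end MaxwellStefanOp

theorem MSmatF0_apply {m : ℕ} (k : Fin (m + 1) → Fin (m + 1) → ℝ) (c : Fin (m + 1) → ℝ)
    (i j : Fin m) :
    MSmatF0 m k c i j = (if i = j then ∑ r, k i.castSucc r * c r else 0)
      - (k i.castSucc j.castSucc - k i.castSucc (Fin.last m)) * c i.castSucc := by
  rw [MSmatF0, of_apply]
  split_ifs with hij
  · subst hij
    have hsplit (f : Fin (m + 1) → ℝ) : ∑ r, f r
        = f i.castSucc + ∑ j ∈ univ.erase i, f j.castSucc + f (Fin.last m) := by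
      rw [Fin.sum_univ_castSucc, ← add_sum_erase _ _ (mem_univ i)]
    rw [hsplit (fun r => k i.castSucc r * c r), hsplit c]
    simp only [sub_mul, sum_sub_distrib, ← mul_sum]
    ring
  · ring

theorem MSmatF0_map_mulVec {m : ℕ} (k : Fin (m + 1) → Fin (m + 1) → ℝ) (c : Fin (m + 1) → ℝ)
    (v : Fin m → ℂ) (i : Fin m) :
    ((MSmatF0 m k c).map ofReal *ᵥ v) i
      = maxwellStefanOp k c (Fin.snoc v (-∑ j, v j)) i.castSucc := by
  simp only [mulVec, dotProduct, map_apply, MSmatF0_apply, maxwellStefanOp_eq_sub,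
    Fin.sum_univ_castSucc (n := m), Fin.snoc_castSucc, Fin.snoc_last, ofReal_sub, ofReal_mul,
    sub_mul, sum_sub_distrib, apply_ite ofReal, ofReal_zero, ite_mul, zero_mul, sum_ite_eq,
    mem_univ, if_true]
  rw [sub_right_inj, ← sum_sub_distrib]
  simp only [mul_add, mul_neg, mul_sum, ← sum_neg_distrib, ← sum_add_distrib]
  exact sum_congr rfl fun j _ => by ring

theorem maxwellStefanOp_snoc_of_mulVec_eq_smul {m : ℕ} {k : Fin (m + 1) → Fin (m + 1) → ℝ}
    (hsymm : ∀ i j, k i j = k j i) (c : Fin (m + 1) → ℝ) {v : Fin m → ℂ} {μ : ℂ}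
    (hv : (MSmatF0 m k c).map ofReal *ᵥ v = μ • v) (i : Fin (m + 1)) :
    maxwellStefanOp k c (Fin.snoc v (-∑ j, v j)) i
      = μ * (Fin.snoc v (-∑ j, v j) : Fin (m + 1) → ℂ) i := by
  have hcast (i : Fin m) : maxwellStefanOp k c (Fin.snoc v (-∑ j, v j)) i.castSucc
      = μ * v i := by
    rw [← MSmatF0_map_mulVec, hv, Pi.smul_apply, smul_eq_mul]
  induction i using Fin.lastCases with
  | cast i => rw [hcast, Fin.snoc_castSucc]
  | last =>
    have hsum := sum_maxwellStefanOp_eq_zero (c := c) hsymm (Fin.snoc v (-∑ j, v j))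
    rw [Fin.sum_univ_castSucc] at hsum
    simp only [hcast, ← mul_sum] at hsum
    rw [Fin.snoc_last]
    linear_combination hsum

theorem MSmatF0_eigenvalue_bounds {m : ℕ} {k : Fin (m + 1) → Fin (m + 1) → ℝ}
    {c : Fin (m + 1) → ℝ} {δ₀ B : ℝ} (hsymm : ∀ i j, k i j = k j i)
    (hk : ∀ i j, i ≠ j → 0 ≤ k i j) (hδ₀ : ∀ i j, i ≠ j → δ₀ ≤ k i j) (hc : ∀ i, 0 ≤ c i)
    (hB : ∀ i, ∑ j ∈ univ.erase i, k i j * c j < B) {v : Fin m → ℂ} {μ : ℂ} (hv0 : v ≠ 0)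
    (hv : (MSmatF0 m k c).map ofReal *ᵥ v = μ • v) :
    ∃ l : ℝ, μ = l ∧ δ₀ * ∑ i, c i ≤ l ∧ l < 2 * B := by
  refine maxwellStefanOp_eigenvalue_bounds hsymm hk hδ₀ hc hB ?_ ?_
    (maxwellStefanOp_snoc_of_mulVec_eq_smul hsymm c hv)
  · obtain ⟨i, hi⟩ := Function.ne_iff.1 hv0
    exact Function.ne_iff.2 ⟨i.castSucc, by simpa using hi⟩
  · simp [Fin.sum_univ_castSucc]

theorem sum_erase_mul_lt_mul_sum {ι : Type*} [Fintype ι] [DecidableEq ι] [Nontrivial ι]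
    {k : ι → ι → ℝ} {c : ι → ℝ} {C : ℝ} (hkpos : ∀ i j, i ≠ j → 0 < k i j)
    (hcle : ∀ i, c i ≤ C) (hC : 0 < C) (i : ι) :
    ∑ j ∈ univ.erase i, k i j * c j < C * ∑ l, ∑ j ∈ univ.erase l, k l j := by
  have hrow (l : ι) : 0 < ∑ j ∈ univ.erase l, k l j := by
    obtain ⟨j, hj⟩ := exists_ne l
    exact sum_pos (fun j hj => hkpos l j (ne_of_mem_erase hj).symm)
      ⟨j, mem_erase.2 ⟨hj, mem_univ j⟩⟩
  obtain ⟨l, hl⟩ := exists_ne i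
  calc ∑ j ∈ univ.erase i, k i j * c j ≤ C * ∑ j ∈ univ.erase i, k i j := by
        rw [mul_sum]
        exact sum_le_sum fun j hj => by
          rw [mul_comm C]
          exact mul_le_mul_of_nonneg_left (hcle j) (hkpos i j (ne_of_mem_erase hj).symm).le
    _ < C * ∑ l, ∑ j ∈ univ.erase l, k l j :=
        mul_lt_mul_of_pos_left (single_lt_sum hl (mem_univ i) (mem_univ l) (hrow l)
          fun l _ _ => (hrow l).le) hC

theorem Matrix.exists_mulVec_eq_smul_of_mem_spectrum {n K : Type*} [Fintype n] [DecidableEq n]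
    [Field K] {M : Matrix n n K} {μ : K} (hμ : μ ∈ spectrum K M) :
    ∃ v ≠ 0, M *ᵥ v = μ • v := by
  rw [← spectrum_toLin', ← Module.End.hasEigenvalue_iff_mem_spectrum] at hμ
  obtain ⟨v, hv⟩ := hμ.exists_hasEigenvector
  exact ⟨v, hv.2, by simpa using hv.apply_eq_smul⟩

theorem Matrix.exists_mulVec_eq_div_smul_of_mem_spectrum {n : Type*} [Fintype n] [DecidableEq n]
    {A : Matrix n n ℝ} (hA : IsUnit A.det) {T : ℝ} (hT : T ≠ 0) {μ : ℂ}
    (hμ : μ ∈ spectrum ℂ ((T • A⁻¹).map ofReal)) :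
    ∃ v ≠ 0, A.map ofReal *ᵥ v = (T / μ) • v := by
  obtain ⟨v, hv0, hv⟩ := exists_mulVec_eq_smul_of_mem_spectrum hμ
  have hAv : (T : ℂ) • v = μ • (A.map ofReal *ᵥ v) := by
    have hinv : A.map ofReal * A⁻¹.map ofReal = 1 := by
      calc A.map ofReal * A⁻¹.map ofReal = (A * A⁻¹).map ofReal :=
            (Matrix.map_mul (f := ofRealHom)).symm
        _ = 1 := by rw [mul_nonsing_inv A hA]; exact Matrix.map_one _ ofReal_zero ofReal_one
    have := congrArg (A.map ofReal *ᵥ ·) hv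
    simpa [Matrix.map_smul', mulVec_smul, mulVec_mulVec, hinv, smul_mulVec] using this
  have hμ0 : μ ≠ 0 := by
    rintro rfl
    simp [hT, hv0] at hAv
  refine ⟨v, hv0, ?_⟩
  rw [div_eq_inv_mul, mul_smul, hAv, smul_smul, inv_mul_cancel₀ hμ0, one_smul]

theorem Matrix.isUnit_det_of_map_ofReal_mulVec_ne_zero {n : Type*} [Fintype n] [DecidableEq n]
    {A : Matrix n n ℝ} (hA : ∀ v : n → ℂ, v ≠ 0 → A.map ofReal *ᵥ v ≠ 0) : IsUnit A.det := by
  rw [isUnit_iff_ne_zero]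
  intro hdet
  have hdetℂ : (A.map ofReal).det = 0 := by
    rw [show A.map ofReal = ofRealHom.mapMatrix A from rfl, ← RingHom.map_det, hdet, map_zero]
  obtain ⟨v, hv0, hv⟩ := exists_mulVec_eq_zero_iff.2 hdetℂ
  exact hA v hv0 hv

/-- normal ellipticity of the principal symbol: if `T > 0` is a real
number, then every complex eigenvalue of `T • F₀⁻¹` is real and lies in
`(T * η⁻¹, T * δ⁻¹]`; in particular every such eigenvalue has strictly positive
real part. -/
theorem spectrum_T_smul_F0_inv
    (m : ℕ) (hm : 1 ≤ m)
    (k : Fin (m + 1) → Fin (m + 1) → ℝ)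
    (hsymm : ∀ i j, k i j = k j i)
    (hkpos : ∀ i j, i ≠ j → 0 < k i j)
    (c : Fin (m + 1) → ℝ)
    (hc : ∀ i, 0 ≤ c i)
    (cmin cmax : ℝ)
    (hcmin : 0 < cmin)
    (hmin : cmin ≤ ∑ i, c i)
    (hmax : ∑ i, c i ≤ cmax)
    (δ₀ : ℝ)
    (hδ₀ : IsLeast {x : ℝ | ∃ i j : Fin (m + 1), i ≠ j ∧ k i j = x} δ₀)
    (δ η : ℝ)
    (hδ : δ = cmin * δ₀)
    (hη : η = 2 * cmax * ∑ i : Fin (m + 1), ∑ j ∈ Finset.univ.erase i, k i j)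
    (T : ℝ) (hT : 0 < T) :
    ∀ μ ∈ spectrum ℂ ((T • (MSmatF0 m k c)⁻¹).map Complex.ofReal),
      (μ.im = 0 ∧ T * η⁻¹ < μ.re ∧ μ.re ≤ T * δ⁻¹) ∧ 0 < μ.re := by
  intro μ hμ
  have hδ₀pos : 0 < δ₀ := by
    obtain ⟨i, j, hij, rfl⟩ := hδ₀.1
    exact hkpos i j hij
  have hδpos : 0 < δ := hδ ▸ mul_pos hcmin hδ₀pos
  have hctot : 0 < ∑ i, c i := hcmin.trans_le hmin
  have : Nontrivial (Fin (m + 1)) := Fin.nontrivial_iff_two_le.2 (by omega)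
  have heig (ν : ℂ) (v : Fin m → ℂ) (hv0 : v ≠ 0) (hv : (MSmatF0 m k c).map ofReal *ᵥ v = ν • v) :
      ∃ l : ℝ, ν = l ∧ δ ≤ l ∧ l < η := by
    obtain ⟨l, hνl, hlow, hup⟩ := MSmatF0_eigenvalue_bounds hsymm
      (fun i j hij => (hkpos i j hij).le) (fun i j hij => hδ₀.2 ⟨i, j, hij, rfl⟩) hc
      (sum_erase_mul_lt_mul_sum hkpos
        (fun i => (single_le_sum (fun j _ => hc j) (mem_univ i)).trans hmax) (hctot.trans_le hmax))
      hv0 hv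
    refine ⟨l, hνl, ?_, by rw [hη]; linarith⟩
    rw [hδ]
    linarith [mul_le_mul_of_nonneg_right hmin hδ₀pos.le]
  have hdet : IsUnit (MSmatF0 m k c).det := by
    refine isUnit_det_of_map_ofReal_mulVec_ne_zero fun v hv0 hv => ?_
    obtain ⟨l, hl, hδl, -⟩ := heig 0 v hv0 (by rw [hv, zero_smul])
    have : l = 0 := by exact_mod_cast hl.symm
    linarith
  obtain ⟨v, hv0, hv⟩ := exists_mulVec_eq_div_smul_of_mem_spectrum hdet hT.ne' hμ
  obtain ⟨l, hl, hδl, hlη⟩ := heig _ v hv0 hv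
  have hlpos : 0 < l := hδpos.trans_le hδl
  have hμl : μ = (T / l : ℝ) := by
    rw [ofReal_div, ← hl, div_div_cancel₀ (ofReal_ne_zero.2 hT.ne')]
  rw [hμl, ofReal_re, ofReal_im, ← div_eq_mul_inv, ← div_eq_mul_inv]
  exact ⟨⟨rfl, div_lt_div_of_pos_left hT hlpos hlη, div_le_div_of_nonneg_left hT.le hδpos hδl⟩,
    by positivity⟩
end

section
/- Reduction to a quasi-linear parabolic system: let Ω ⊂ ℝ^d be open, let c_1,…,c_n : (0,∞)×Ω → ℝ and T : (0,∞)×Ω → ℝ be twice continuously differentiable with c_i ≥ 0 and 0 < c_min ≤ ∑_{i=1}^n c_i ≤ c_max on (0,∞)×Ω, let α ∈ ℝ, and let J_1,…,J_n : (0,∞)×Ω → ℝ^d be continuously differentiable. Suppose that on (0,∞)×Ω the mass balance equations ∂_t c_i + div_x J_i = 0 (i = 1,…,n), the flux–gradient relations ∇_x(c_i T) = −∑_{j≠i} k_{ij} (c_j J_i − c_i J_j) (i = 1,…,n), and the closure relation ∑_{i=1}^n J_i = −α ∇_x c_tot hold, where c_tot := ∑_{i=1}^n c_i. Then, with B :=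 F_0^{−1} and c′ = (c_1,…,c_{n−1})^⊤, the vector c′ satisfies on (0,∞)×Ω the quasi-linear parabolic system ∂_t c′ − div_x(T B ∇_x c′) = div_x(B (c′ ⊗ ∇_x T)) + α div_x(B (c̃′ ⊗ ∇_x c_tot)), where ∇_x c′ is the (n−1)×d matrix with rows ∇_x c_i, (v ⊗ w)_{ij} = v_i w_j, and the divergence of an (n−1)×d matrix field is taken row by row. -/
/-- The vector `c̃′` with entries `(c̃′) i = k i n * c i`, `i = 1, …, n - 1`. -/
def MSctil (m : ℕ) (k : Fin (m + 1) → Fin (m + 1) → ℝ)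
    (c : Fin (m + 1) → ℝ) : Fin m → ℝ :=
  fun i => k i.castSucc (Fin.last m) * c i.castSucc

/-- The `l`-th spatial partial derivative `∂f/∂x_l` of `f : ℝ^d → ℝ` at `x`. -/
noncomputable def pderiv' (d : ℕ) (f : (Fin d → ℝ) → ℝ) (l : Fin d)
    (x : Fin d → ℝ) : ℝ :=
  fderiv ℝ f x (Pi.single l 1)

/-!
Row `i` of `F₀` applied to `J′ = (J₁, …, J_{n-1})` is the Maxwell–Stefan friction
`∑ⱼ kᵢⱼ (cⱼ Jᵢ - cᵢ Jⱼ)` plus `kᵢₙ cᵢ ∑ⱼ Jⱼ`. So the flux–gradient and closure relations say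
exactly that `F₀ J′ = -(T ∇c′ + c′ ⊗ ∇T + α c̃′ ⊗ ∇c_tot)`; solving with `B = F₀⁻¹` and inserting
`J′` into the mass balance gives the parabolic system.

`F₀` is invertible: a null vector `v`, extended by `-∑ v` to a vector `z` of total zero, lies in
the kernel of the friction operator. Testing that kernel equation against `uᵢ = zᵢ / cᵢ` yields
`∑ᵢⱼ kᵢⱼ cᵢ cⱼ (uᵢ - uⱼ)² = 0`, so `z` is proportional to `c`, and its zero total forces `z = 0`.
-/

open Finset
open scoped Matrix

section Friction

variable {ι : Type*} [Fintype ι] (k : ι → ι → ℝ)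

def msFriction (C w : ι → ℝ) (i : ι) : ℝ :=
  ∑ j, k i j * (C j * w i - C i * w j)

variable {k}

lemma msFriction_eq_sum_erase [DecidableEq ι] (C w : ι → ℝ) (i : ι) :
    msFriction k C w i = ∑ j ∈ univ.erase i, k i j * (C j * w i - C i * w j) :=
  (sum_erase _ (by ring)).symm

lemma sum_sum_eq_zero_of_antisymm {f : ι → ι → ℝ} (hf : ∀ i j, f i j = -f j i) :
    ∑ i, ∑ j, f i j = 0 := by
  have h : ∑ i, ∑ j, f i j = -∑ i, ∑ j, f i j :=
    calc ∑ i, ∑ j, f i j = ∑ i, ∑ j, -f j i :=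
          sum_congr rfl fun i _ => sum_congr rfl fun j _ => hf i j
      _ = -∑ i, ∑ j, f i j := by rw [sum_comm]; simp only [sum_neg_distrib]
  linarith

lemma sum_msFriction (hsymm : ∀ i j, k i j = k j i) (C w : ι → ℝ) :
    ∑ i, msFriction k C w i = 0 :=
  sum_sum_eq_zero_of_antisymm fun i j => by rw [hsymm i j]; ring

lemma two_mul_sum_mul_msFriction (hsymm : ∀ i j, k i j = k j i) (C u : ι → ℝ) :
    2 * ∑ i, u i * msFriction k C (fun j => C j * u j) i
      = ∑ i, ∑ j, k i j * (C i * C j * (u i - u j) ^ 2) := by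
  have hrow : ∀ i, 2 * (u i * msFriction k C (fun j => C j * u j) i)
      - ∑ j, k i j * (C i * C j * (u i - u j) ^ 2)
      = ∑ j, k i j * C i * C j * (u i ^ 2 - u j ^ 2) := fun i => by
    rw [msFriction, mul_sum, mul_sum, ← sum_sub_distrib]
    exact sum_congr rfl fun j _ => by ring
  rw [← sub_eq_zero, mul_sum, ← sum_sub_distrib, sum_congr rfl fun i _ => hrow i]
  exact sum_sum_eq_zero_of_antisymm fun i j => by rw [hsymm i j]; ring

lemma eq_zero_of_msFriction_eq_zero_of_conc_eq_zero (hkpos : ∀ i j, i ≠ j → 0 < k i j)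
    {C w : ι → ℝ} (hC : ∀ i, 0 ≤ C i) (hpos : 0 < ∑ i, C i)
    {i : ι} (hwi : msFriction k C w i = 0) (hCi : C i = 0) : w i = 0 := by
  have hfric : msFriction k C w i = (∑ j, k i j * C j) * w i := by
    rw [msFriction, sum_mul]
    exact sum_congr rfl fun j _ => by rw [hCi]; ring
  obtain ⟨j₀, -, hj₀⟩ := exists_lt_of_sum_lt (f := fun _ => (0 : ℝ)) (by simpa using hpos)
  have hj₀i : j₀ ≠ i := by rintro rfl; exact hj₀.ne' hCi
  have hdrag : 0 < ∑ j, k i j * C j := by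
    refine sum_pos' (fun j _ => ?_) ⟨j₀, mem_univ _, mul_pos (hkpos i j₀ hj₀i.symm) hj₀⟩
    rcases eq_or_ne j i with rfl | hji
    · simp [hCi]
    · exact mul_nonneg (hkpos i j hji.symm).le (hC j)
  rw [hfric] at hwi
  exact (mul_eq_zero.mp hwi).resolve_left hdrag.ne'

lemma mul_eq_mul_of_msFriction_eq_zero (hsymm : ∀ i j, k i j = k j i)
    (hkpos : ∀ i j, i ≠ j → 0 < k i j)
    {C w : ι → ℝ} (hC : ∀ i, 0 ≤ C i) (hpos : 0 < ∑ i, C i)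
    (hw : ∀ i, msFriction k C w i = 0) (i j : ι) : C j * w i = C i * w j := by
  obtain ⟨u, hwu⟩ : ∃ u : ι → ℝ, w = fun i => C i * u i := by
    refine ⟨fun i => w i / C i, funext fun i => ?_⟩
    rcases eq_or_ne (C i) 0 with hCi | hCi
    · simp [hCi, eq_zero_of_msFriction_eq_zero_of_conc_eq_zero hkpos hC hpos (hw i) hCi]
    · exact (mul_div_cancel₀ _ hCi).symm
  have hterm_nonneg : ∀ i j, 0 ≤ k i j * (C i * C j * (u i - u j) ^ 2) := by
    intro i j
    rcases eq_or_ne i j with rfl | hij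
    · simp
    · exact mul_nonneg (hkpos i j hij).le
        (mul_nonneg (mul_nonneg (hC i) (hC j)) (sq_nonneg _))
  have henergy : ∑ i, ∑ j, k i j * (C i * C j * (u i - u j) ^ 2) = 0 := by
    rw [← two_mul_sum_mul_msFriction hsymm, ← hwu]
    simp [hw]
  have hterm : k i j * (C i * C j * (u i - u j) ^ 2) = 0 :=
    (sum_eq_zero_iff_of_nonneg fun j _ => hterm_nonneg i j).mp
      ((sum_eq_zero_iff_of_nonneg fun i _ => sum_nonneg fun j _ => hterm_nonneg i j).mp
        henergy i (mem_univ i)) j (mem_univ j)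
  rcases eq_or_ne i j with rfl | hij
  · ring
  have hsq : C i * C j * (u i - u j) ^ 2 = 0 :=
    (mul_eq_zero.mp hterm).resolve_left (hkpos i j hij).ne'
  have hdiff : C i * C j * (u i - u j) = 0 :=
    pow_eq_zero_iff two_ne_zero |>.mp (by linear_combination C i * C j * hsq)
  rw [hwu]
  linear_combination hdiff

lemma eq_zero_of_msFriction_eq_zero (hsymm : ∀ i j, k i j = k j i)
    (hkpos : ∀ i j, i ≠ j → 0 < k i j)
    {C w : ι → ℝ} (hC : ∀ i, 0 ≤ C i) (hpos : 0 < ∑ i, C i)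
    (hw : ∀ i, msFriction k C w i = 0) (hsum : ∑ i, w i = 0) : w = 0 := by
  funext i
  have h : (∑ j, C j) * w i = C i * ∑ j, w j := by
    rw [sum_mul, mul_sum]
    exact sum_congr rfl fun j _ => mul_eq_mul_of_msFriction_eq_zero hsymm hkpos hC hpos hw i j
  rw [hsum, mul_zero] at h
  exact (mul_eq_zero.mp h).resolve_left hpos.ne'

end Friction

lemma MSmatF0_eq (m : ℕ) (k : Fin (m + 1) → Fin (m + 1) → ℝ) (C : Fin (m + 1) → ℝ) :
    MSmatF0 m k C
      = Matrix.diagonal (fun i => ∑ j : Fin m,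
          (k i.castSucc j.castSucc - k i.castSucc (Fin.last m)) * C j.castSucc
          + (∑ r, C r) * k i.castSucc (Fin.last m))
        - Matrix.of fun i j =>
            (k i.castSucc j.castSucc - k i.castSucc (Fin.last m)) * C i.castSucc := by
  ext i j
  rcases eq_or_ne i j with rfl | hij
  · simp [MSmatF0, sum_erase_eq_sub]; ring
  · simp [MSmatF0, hij]

lemma MSmatF0_mulVec_apply (m : ℕ) (k : Fin (m + 1) → Fin (m + 1) → ℝ)
    (C w : Fin (m + 1) → ℝ) (i : Fin m) :
    (MSmatF0 m k C *ᵥ fun j => w j.castSucc) i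
      = msFriction k C w i.castSucc + k i.castSucc (Fin.last m) * C i.castSucc * ∑ r, w r := by
  rw [MSmatF0_eq, Matrix.sub_mulVec, Pi.sub_apply, Matrix.mulVec_diagonal, msFriction]
  simp only [Fin.sum_univ_castSucc, Matrix.mulVec, dotProduct, Matrix.of_apply, mul_add,
    mul_sum, mul_sub, sum_sub_distrib, mul_comm, mul_left_comm]
  ring

lemma MSmatF0_det_ne_zero {m : ℕ} {k : Fin (m + 1) → Fin (m + 1) → ℝ}
    (hsymm : ∀ i j, k i j = k j i) (hkpos : ∀ i j, i ≠ j → 0 < k i j)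
    {C : Fin (m + 1) → ℝ} (hC : ∀ r, 0 ≤ C r) (hpos : 0 < ∑ r, C r) :
    (MSmatF0 m k C).det ≠ 0 := by
  intro hdet
  obtain ⟨v, hv, hFv⟩ := Matrix.exists_mulVec_eq_zero_iff.mpr hdet
  set z : Fin (m + 1) → ℝ := Fin.lastCases (-∑ j, v j) v
  have hzv : (fun j => z j.castSucc) = v := funext fun j => Fin.lastCases_castSucc _
  have hsum : ∑ r, z r = 0 := by simp [z, Fin.sum_univ_castSucc]
  have hrows : ∀ i : Fin m, msFriction k C z i.castSucc = 0 := fun i => by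
    simpa [hzv, hFv, hsum] using (MSmatF0_mulVec_apply m k C z i).symm
  have hlast : msFriction k C z (Fin.last m) = 0 := by
    simpa [Fin.sum_univ_castSucc, hrows] using sum_msFriction hsymm C z
  have hz := eq_zero_of_msFriction_eq_zero hsymm hkpos hC hpos (Fin.lastCases hlast hrows) hsum
  exact hv (by rw [← hzv, hz]; rfl)

lemma castSucc_eq_neg_sum_inv_MSmatF0 {m : ℕ} {k : Fin (m + 1) → Fin (m + 1) → ℝ}
    (hsymm : ∀ i j, k i j = k j i) (hkpos : ∀ i j, i ≠ j → 0 < k i j)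
    {C : Fin (m + 1) → ℝ} (hC : ∀ r, 0 ≤ C r) (hpos : 0 < ∑ r, C r)
    {J G : Fin (m + 1) → ℝ} {α g : ℝ}
    (hfric : ∀ r, G r = -msFriction k C J r) (hsum : ∑ r, J r = -(α * g)) (i : Fin m) :
    J i.castSucc = -∑ j, (MSmatF0 m k C)⁻¹ i j * (G j.castSucc + α * (MSctil m k C j * g)) := by
  have hFJ : (MSmatF0 m k C *ᵥ fun j => J j.castSucc)
      = fun j => -(G j.castSucc + α * (MSctil m k C j * g)) := by
    funext j
    rw [MSmatF0_mulVec_apply, hfric, hsum, MSctil]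
    ring
  have hinv : (MSmatF0 m k C)⁻¹ *ᵥ (MSmatF0 m k C *ᵥ fun j => J j.castSucc)
      = fun j => J j.castSucc := by
    rw [Matrix.mulVec_mulVec,
      Matrix.nonsing_inv_mul _ (MSmatF0_det_ne_zero hsymm hkpos hC hpos).isUnit,
      Matrix.one_mulVec]
  rw [← congrFun hinv i, hFJ, Matrix.mulVec, dotProduct, ← sum_neg_distrib]
  simp only [mul_neg]

section MatrixCalculus

variable {𝕜 X : Type*} [NontriviallyNormedField 𝕜] [NormedAddCommGroup X] [NormedSpace 𝕜 X]

lemma ContDiffOn.contDiffAt_slice {E F : Type*} [NormedAddCommGroup E] [NormedSpace 𝕜 E]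
    [NormedAddCommGroup F] [NormedSpace 𝕜 F]
    {f : E × F → X} {s : Set (E × F)} {n : WithTop ℕ∞} (hf : ContDiffOn 𝕜 n f s)
    (hs : IsOpen s) {t : E} {y : F} (hty : (t, y) ∈ s) :
    ContDiffAt 𝕜 n (fun z => f (t, z)) y :=
  (hf.contDiffAt (hs.mem_nhds hty)).comp y (contDiffAt_const.prodMk contDiffAt_id)

lemma DifferentiableAt.matrix_det {ι : Type*} [Fintype ι] [DecidableEq ι]
    {f : X → Matrix ι ι 𝕜} {y : X} (hf : ∀ i j, DifferentiableAt 𝕜 (fun z => f z i j) y) :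
    DifferentiableAt 𝕜 (fun z => (f z).det) y := by
  simp only [Matrix.det_apply']
  exact DifferentiableAt.fun_sum fun σ _ =>
    (HasFDerivAt.finsetProd fun i _ => (hf (σ i) i).hasFDerivAt).differentiableAt.const_mul _

lemma DifferentiableAt.matrix_inv_apply {ι : Type*} [Fintype ι] [DecidableEq ι]
    {f : X → Matrix ι ι 𝕜} {y : X} (hf : ∀ i j, DifferentiableAt 𝕜 (fun z => f z i j) y)
    (hdet : (f y).det ≠ 0) (i j : ι) :
    DifferentiableAt 𝕜 (fun z => (f z)⁻¹ i j) y := by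
  -- Cramer's rule: `A⁻¹ i j = (det A)⁻¹ * det (A with row j replaced by the basis vector eᵢ)`
  have hcramer : (fun z => (f z)⁻¹ i j)
      = fun z => ((f z).det)⁻¹ * ((f z).updateRow j (Pi.single i 1)).det := by
    funext z
    rw [Matrix.inv_def, Matrix.smul_apply, Ring.inverse_eq_inv, smul_eq_mul,
      Matrix.adjugate_apply]
  have hupdate : ∀ a b, DifferentiableAt 𝕜 (fun z => (f z).updateRow j (Pi.single i 1) a b) y := by
    intro a b
    rcases eq_or_ne a j with rfl | haj
    · simp
    · simpa [haj] using hf a b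
  rw [hcramer]
  exact ((DifferentiableAt.matrix_det hf).inv hdet).mul (DifferentiableAt.matrix_det hupdate)

end MatrixCalculus

section PartialDerivative

variable {d : ℕ} {f g : (Fin d → ℝ) → ℝ} {l : Fin d} {x : Fin d → ℝ}

lemma pderiv'_add (hf : DifferentiableAt ℝ f x) (hg : DifferentiableAt ℝ g x) :
    pderiv' d (fun y => f y + g y) l x = pderiv' d f l x + pderiv' d g l x := by
  simp [pderiv', fderiv_fun_add hf hg]

lemma pderiv'_const_mul (hf : DifferentiableAt ℝ f x) (a : ℝ) :
    pderiv' d (fun y => a * f y) l x = a * pderiv' d f l x := by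
  simp [pderiv', fderiv_const_mul hf]

lemma pderiv'_neg : pderiv' d (fun y => -f y) l x = -pderiv' d f l x := by
  simp [pderiv', fderiv_fun_neg]

lemma pderiv'_mul (hf : DifferentiableAt ℝ f x) (hg : DifferentiableAt ℝ g x) :
    pderiv' d (fun y => f y * g y) l x = g x * pderiv' d f l x + f x * pderiv' d g l x := by
  simp only [pderiv', fderiv_fun_mul hf hg, add_apply, smul_apply, smul_eq_mul]
  ring

lemma Filter.EventuallyEq.pderiv'_eq (h : f =ᶠ[nhds x] g) : pderiv' d f l x = pderiv' d g l x := by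
  rw [pderiv', pderiv', h.fderiv_eq]

lemma ContDiffAt.differentiableAt_pderiv' (hf : ContDiffAt ℝ 2 f x) (l : Fin d) :
    DifferentiableAt ℝ (pderiv' d f l) x :=
  ((hf.fderiv_right (m := 1) (by norm_num)).differentiableAt one_ne_zero).clm_apply
    (differentiableAt_const _)

end PartialDerivative

lemma differentiableAt_MSmatF0_apply {m : ℕ} (k : Fin (m + 1) → Fin (m + 1) → ℝ) {X : Type*}
    [NormedAddCommGroup X] [NormedSpace ℝ X] {c : Fin (m + 1) → X → ℝ} {y : X}
    (hc : ∀ r, DifferentiableAt ℝ (c r) y) (a b : Fin m) :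
    DifferentiableAt ℝ (fun z => MSmatF0 m k (fun r => c r z) a b) y := by
  simp only [MSmatF0, Matrix.of_apply]
  split_ifs <;> fun_prop

section Reduction

variable {m d : ℕ} {k : Fin (m + 1) → Fin (m + 1) → ℝ} {c : Fin (m + 1) → (Fin d → ℝ) → ℝ}
  {T : (Fin d → ℝ) → ℝ} {J : Fin (m + 1) → (Fin d → ℝ) → Fin d → ℝ} {α : ℝ}

lemma neg_flux_castSucc_eq (hsymm : ∀ i j, k i j = k j i) (hkpos : ∀ i j, i ≠ j → 0 < k i j)
    {y : Fin d → ℝ} (hc : ∀ r, DifferentiableAt ℝ (c r) y) (hT : DifferentiableAt ℝ T y)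
    (hcnn : ∀ r, 0 ≤ c r y) (hpos : 0 < ∑ r, c r y) (l : Fin d)
    (hflux : ∀ r, pderiv' d (fun z => c r z * T z) l y
      = -∑ j ∈ univ.erase r, k r j * (c j y * J r y l - c r y * J j y l))
    (hclos : ∑ r, J r y l = -(α * pderiv' d (fun z => ∑ r, c r z) l y)) (i : Fin m) :
    -J i.castSucc y l
      = T y * ∑ j, (MSmatF0 m k (fun r => c r y))⁻¹ i j * pderiv' d (c j.castSucc) l y
        + (∑ j, (MSmatF0 m k (fun r => c r y))⁻¹ i j * (c j.castSucc y * pderiv' d T l y)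
          + α * ∑ j, (MSmatF0 m k (fun r => c r y))⁻¹ i j
            * (MSctil m k (fun r => c r y) j * pderiv' d (fun z => ∑ r, c r z) l y)) := by
  have hfric : ∀ r, pderiv' d (fun z => c r z * T z) l y
      = -msFriction k (fun r => c r y) (fun r => J r y l) r := fun r => by
    rw [hflux, msFriction_eq_sum_erase]
  rw [castSucc_eq_neg_sum_inv_MSmatF0 hsymm hkpos hcnn hpos hfric hclos i, neg_neg]
  simp only [pderiv'_mul (hc _) hT, mul_sum, ← sum_add_distrib]
  exact sum_congr rfl fun j _ => by ring

lemma neg_sum_pderiv'_flux_castSucc_eq (hsymm : ∀ i j, k i j = k j i) (hkpos : ∀ i j, i ≠ j → 0 < k i j)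
    {Ω : Set (Fin d → ℝ)} (hΩ : IsOpen Ω)
    (hc : ∀ r, ∀ y ∈ Ω, ContDiffAt ℝ 2 (c r) y) (hT : ∀ y ∈ Ω, ContDiffAt ℝ 2 T y)
    (hcnn : ∀ r, ∀ y ∈ Ω, 0 ≤ c r y) (hpos : ∀ y ∈ Ω, 0 < ∑ r, c r y)
    (hflux : ∀ y ∈ Ω, ∀ r l, pderiv' d (fun z => c r z * T z) l y
      = -∑ j ∈ univ.erase r, k r j * (c j y * J r y l - c r y * J j y l))
    (hclos : ∀ y ∈ Ω, ∀ l, ∑ r, J r y l = -(α * pderiv' d (fun z => ∑ r, c r z) l y))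
    {x : Fin d → ℝ} (hx : x ∈ Ω) (i : Fin m) :
    -∑ l, pderiv' d (fun y => J i.castSucc y l) l x
      = ∑ l, pderiv' d (fun y => T y * ∑ j, (MSmatF0 m k (fun r => c r y))⁻¹ i j
            * pderiv' d (c j.castSucc) l y) l x
        + (∑ l, pderiv' d (fun y => ∑ j, (MSmatF0 m k (fun r => c r y))⁻¹ i j
            * (c j.castSucc y * pderiv' d T l y)) l x
          + α * ∑ l, pderiv' d (fun y => ∑ j, (MSmatF0 m k (fun r => c r y))⁻¹ i j
            * (MSctil m k (fun r => c r y) j * pderiv' d (fun z => ∑ r, c r z) l y)) l x) := by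
  have hcx : ∀ r, DifferentiableAt ℝ (c r) x := fun r => (hc r x hx).differentiableAt two_ne_zero
  have hctot : ContDiffAt ℝ 2 (fun z => ∑ r, c r z) x := ContDiffAt.sum fun r _ => hc r x hx
  have hB : ∀ a b, DifferentiableAt ℝ (fun y => (MSmatF0 m k (fun r => c r y))⁻¹ a b) x :=
    DifferentiableAt.matrix_inv_apply (differentiableAt_MSmatF0_apply k hcx)
      (MSmatF0_det_ne_zero hsymm hkpos (fun r => hcnn r x hx) (hpos x hx))
  have hctil : ∀ j, DifferentiableAt ℝ (fun y => MSctil m k (fun r => c r y) j) x :=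
    fun j => (hcx _).const_mul _
  rw [mul_sum, ← sum_add_distrib, ← sum_add_distrib, ← sum_neg_distrib]
  refine sum_congr rfl fun l _ => ?_
  have hdc : ∀ r, DifferentiableAt ℝ (pderiv' d (c r) l) x :=
    fun r => (hc r x hx).differentiableAt_pderiv' l
  have hdT : DifferentiableAt ℝ (pderiv' d T l) x := (hT x hx).differentiableAt_pderiv' l
  have hdtot := hctot.differentiableAt_pderiv' l
  have hflux_near : (fun y => -J i.castSucc y l) =ᶠ[nhds x] fun y =>
      T y * ∑ j, (MSmatF0 m k (fun r => c r y))⁻¹ i j * pderiv' d (c j.castSucc) l y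
        + (∑ j, (MSmatF0 m k (fun r => c r y))⁻¹ i j * (c j.castSucc y * pderiv' d T l y)
          + α * ∑ j, (MSmatF0 m k (fun r => c r y))⁻¹ i j
            * (MSctil m k (fun r => c r y) j * pderiv' d (fun z => ∑ r, c r z) l y)) := by
    filter_upwards [hΩ.mem_nhds hx] with y hy
    exact neg_flux_castSucc_eq hsymm hkpos (fun r => (hc r y hy).differentiableAt two_ne_zero)
      ((hT y hy).differentiableAt two_ne_zero) (fun r => hcnn r y hy) (hpos y hy) l
      (fun r => hflux y hy r l) (hclos y hy l) i
  have hdiff₁ : DifferentiableAt ℝ (fun y => T y * ∑ j, (MSmatF0 m k (fun r => c r y))⁻¹ i j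
      * pderiv' d (c j.castSucc) l y) x :=
    ((hT x hx).differentiableAt two_ne_zero).fun_mul
      (DifferentiableAt.fun_sum fun j _ => (hB i j).fun_mul (hdc j.castSucc))
  have hdiff₂ : DifferentiableAt ℝ (fun y => ∑ j, (MSmatF0 m k (fun r => c r y))⁻¹ i j
      * (c j.castSucc y * pderiv' d T l y)) x :=
    DifferentiableAt.fun_sum fun j _ => (hB i j).fun_mul ((hcx j.castSucc).fun_mul hdT)
  have hdiff₃ : DifferentiableAt ℝ (fun y => ∑ j, (MSmatF0 m k (fun r => c r y))⁻¹ i j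
      * (MSctil m k (fun r => c r y) j * pderiv' d (fun z => ∑ r, c r z) l y)) x :=
    DifferentiableAt.fun_sum fun j _ => (hB i j).fun_mul ((hctil j).fun_mul hdtot)
  rw [← pderiv'_neg, hflux_near.pderiv'_eq,
    pderiv'_add hdiff₁ (hdiff₂.fun_add (hdiff₃.const_mul α)),
    pderiv'_add hdiff₂ (hdiff₃.const_mul α), pderiv'_const_mul hdiff₃]

end Reduction

theorem reduction_to_quasilinear_parabolic_system_general
    (m : ℕ)
    (k : Fin (m + 1) → Fin (m + 1) → ℝ)
    (hsymm : ∀ i j, k i j = k j i)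
    (hkpos : ∀ i j, i ≠ j → 0 < k i j)
    (d : ℕ)
    (Ω : Set (Fin d → ℝ)) (hΩ : IsOpen Ω)
    (c : Fin (m + 1) → ℝ → (Fin d → ℝ) → ℝ)
    (T : ℝ → (Fin d → ℝ) → ℝ)
    (α : ℝ)
    (J : Fin (m + 1) → ℝ → (Fin d → ℝ) → (Fin d → ℝ))
    (cmin : ℝ) (hcmin : 0 < cmin)
    (hcreg : ∀ i, ContDiffOn ℝ 2
      (fun p : ℝ × (Fin d → ℝ) => c i p.1 p.2) (Set.Ioi 0 ×ˢ Ω))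
    (hTreg : ContDiffOn ℝ 2
      (fun p : ℝ × (Fin d → ℝ) => T p.1 p.2) (Set.Ioi 0 ×ˢ Ω))
    (hcnn : ∀ i, ∀ t > (0 : ℝ), ∀ y ∈ Ω, 0 ≤ c i t y)
    (hlb : ∀ t > (0 : ℝ), ∀ y ∈ Ω, cmin ≤ ∑ i, c i t y)
    (hmass : ∀ t > (0 : ℝ), ∀ x ∈ Ω, ∀ i : Fin (m + 1),
      deriv (fun s => c i s x) t
        + ∑ l : Fin d, pderiv' d (fun y => J i t y l) l x = 0)
    (hflux : ∀ t > (0 : ℝ), ∀ x ∈ Ω, ∀ i : Fin (m + 1), ∀ l : Fin d,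
      pderiv' d (fun y => c i t y * T t y) l x
        = -∑ j ∈ Finset.univ.erase i,
            k i j * (c j t x * J i t x l - c i t x * J j t x l))
    (hclos : ∀ t > (0 : ℝ), ∀ x ∈ Ω, ∀ l : Fin d,
      ∑ i, J i t x l
        = -(α * pderiv' d (fun y => ∑ r, c r t y) l x)) :
    ∀ t > (0 : ℝ), ∀ x ∈ Ω, ∀ i : Fin m,
      deriv (fun s => c i.castSucc s x) t
        - ∑ l : Fin d, pderiv' d
            (fun y => T t y * ∑ j : Fin m,
              ((MSmatF0 m k (fun r => c r t y))⁻¹) i j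
                * pderiv' d (fun z => c j.castSucc t z) l y) l x
      = ∑ l : Fin d, pderiv' d
            (fun y => ∑ j : Fin m,
              ((MSmatF0 m k (fun r => c r t y))⁻¹) i j
                * (c j.castSucc t y * pderiv' d (T t) l y)) l x
        + α * ∑ l : Fin d, pderiv' d
            (fun y => ∑ j : Fin m,
              ((MSmatF0 m k (fun r => c r t y))⁻¹) i j
                * (MSctil m k (fun r => c r t y) j
                    * pderiv' d (fun z => ∑ r, c r t z) l y)) l x := by
  intro t ht x hx i
  have hopen : IsOpen (Set.Ioi (0 : ℝ) ×ˢ Ω) := isOpen_Ioi.prod hΩ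
  have hdiv := neg_sum_pderiv'_flux_castSucc_eq (c := fun r y => c r t y) (T := T t)
    (J := fun r y => J r t y) hsymm hkpos hΩ
    (fun r y hy => (hcreg r).contDiffAt_slice hopen ⟨ht, hy⟩)
    (fun y hy => hTreg.contDiffAt_slice hopen ⟨ht, hy⟩)
    (fun r y hy => hcnn r t ht y hy) (fun y hy => hcmin.trans_le (hlb t ht y hy))
    (hflux t ht) (hclos t ht) hx i
  linarith [hmass t ht x hx i.castSucc]

/-- reduction to a quasi-linear parabolic system: if on
`(0, ∞) × Ω` the mass balance equations `∂ₜcᵢ + div Jᵢ = 0`, the flux–gradient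
relations `∇ₓ(cᵢ T) = -∑_{j ≠ i} k i j (cⱼ Jᵢ - cᵢ Jⱼ)`, and the closure relation
`∑ i, Jᵢ = -α ∇ₓ c_tot` hold, then, with `B = F₀⁻¹`, the vector
`c′ = (c₁, …, c_{n-1})` satisfies on `(0, ∞) × Ω` the quasi-linear parabolic
system `∂ₜc′ - div(T B ∇ₓc′) = div(B (c′ ⊗ ∇ₓT)) + α div(B (c̃′ ⊗ ∇ₓ c_tot))`,
the divergence of a matrix field being taken row by row. -/
theorem reduction_to_quasilinear_parabolic_system
    (m : ℕ) (hm : 1 ≤ m)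
    (k : Fin (m + 1) → Fin (m + 1) → ℝ)
    (hsymm : ∀ i j, k i j = k j i)
    (hkpos : ∀ i j, i ≠ j → 0 < k i j)
    (d : ℕ) (hd : 1 ≤ d)
    (Ω : Set (Fin d → ℝ)) (hΩ : IsOpen Ω)
    (c : Fin (m + 1) → ℝ → (Fin d → ℝ) → ℝ)
    (T : ℝ → (Fin d → ℝ) → ℝ)
    (α : ℝ)
    (J : Fin (m + 1) → ℝ → (Fin d → ℝ) → (Fin d → ℝ))
    (cmin cmax : ℝ) (hcmin : 0 < cmin)
    (hcreg : ∀ i, ContDiffOn ℝ 2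
      (fun p : ℝ × (Fin d → ℝ) => c i p.1 p.2) (Set.Ioi 0 ×ˢ Ω))
    (hTreg : ContDiffOn ℝ 2
      (fun p : ℝ × (Fin d → ℝ) => T p.1 p.2) (Set.Ioi 0 ×ˢ Ω))
    (hJreg : ∀ i, ContDiffOn ℝ 1
      (fun p : ℝ × (Fin d → ℝ) => J i p.1 p.2) (Set.Ioi 0 ×ˢ Ω))
    (hcnn : ∀ i, ∀ t > (0 : ℝ), ∀ y ∈ Ω, 0 ≤ c i t y)
    (hlb : ∀ t > (0 : ℝ), ∀ y ∈ Ω, cmin ≤ ∑ i, c i t y)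
    (hub : ∀ t > (0 : ℝ), ∀ y ∈ Ω, ∑ i, c i t y ≤ cmax)
    (hmass : ∀ t > (0 : ℝ), ∀ x ∈ Ω, ∀ i : Fin (m + 1),
      deriv (fun s => c i s x) t
        + ∑ l : Fin d, pderiv' d (fun y => J i t y l) l x = 0)
    (hflux : ∀ t > (0 : ℝ), ∀ x ∈ Ω, ∀ i : Fin (m + 1), ∀ l : Fin d,
      pderiv' d (fun y => c i t y * T t y) l x
        = -∑ j ∈ Finset.univ.erase i,
            k i j * (c j t x * J i t x l - c i t x * J j t x l))
    (hclos : ∀ t > (0 : ℝ), ∀ x ∈ Ω, ∀ l : Fin d,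
      ∑ i, J i t x l
        = -(α * pderiv' d (fun y => ∑ r, c r t y) l x)) :
    ∀ t > (0 : ℝ), ∀ x ∈ Ω, ∀ i : Fin m,
      deriv (fun s => c i.castSucc s x) t
        - ∑ l : Fin d, pderiv' d
            (fun y => T t y * ∑ j : Fin m,
              ((MSmatF0 m k (fun r => c r t y))⁻¹) i j
                * pderiv' d (fun z => c j.castSucc t z) l y) l x
      = ∑ l : Fin d, pderiv' d
            (fun y => ∑ j : Fin m,
              ((MSmatF0 m k (fun r => c r t y))⁻¹) i j
                * (c j.castSucc t y * pderiv' d (T t) l y)) l x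
        + α * ∑ l : Fin d, pderiv' d
            (fun y => ∑ j : Fin m,
              ((MSmatF0 m k (fun r => c r t y))⁻¹) i j
                * (MSctil m k (fun r => c r t y) j
                    * pderiv' d (fun z => ∑ r, c r t z) l y)) l x :=
  reduction_to_quasilinear_parabolic_system_general m k hsymm hkpos d Ω hΩ c T α J cmin hcmin hcreg
    hTreg hcnn hlb hmass hflux hclos
end
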